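/- Let A ∈ ℝ^{n×p}, and define the lower and upper restricted isometry constants δ⁻_k(A) = inf{‖Aα‖₂²/‖α‖₂² : α is k-sparse, α ≠ 0} and δ⁺_k(A) = sup{‖Aα‖₂²/‖α‖₂² : α is k-sparse, α ≠ 0}. Then for any k-sparse vectors α₁, α₂ with disjoint supports, |⟨Aα₁, Aα₂⟩| ≤ ((δ⁺_{2k}(A) − δ⁻_{2k}(A))/2) ‖α₁‖₂ ‖α₂‖₂. -/
import Mathlib


open Matrix

/-- A vector is `k`-sparse if it has at most `k` nonzero entries. -/
def IsSparse {p : ℕ} (k : ℕ) (α : Fin p → ℝ) : Prop :=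
  (Finset.univ.filter fun i => α i ≠ 0).card ≤ k

/-- ℓ₂ norm squared. -/
def sqNorm {m : ℕ} (x : Fin m → ℝ) : ℝ := ∑ i, (x i) ^ 2

/-- Lower RIP constant of order `k`. -/
noncomputable def ripLower {n p : ℕ} (k : ℕ) (A : Matrix (Fin n) (Fin p) ℝ) : ℝ :=
  sInf {t : ℝ | ∃ α : Fin p → ℝ, IsSparse k α ∧ α ≠ 0 ∧
    t = sqNorm (A.mulVec α) / sqNorm α}

/-- Upper RIP constant of order `k`. -/
noncomputable def ripUpper {n p : ℕ} (k : ℕ) (A : Matrix (Fin n) (Fin p) ℝ) : ℝ :=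
  sSup {t : ℝ | ∃ α : Fin p → ℝ, IsSparse k α ∧ α ≠ 0 ∧
    t = sqNorm (A.mulVec α) / sqNorm α}

lemma sqNorm_nonneg' {m : ℕ} (x : Fin m → ℝ) : 0 ≤ sqNorm x :=
  Finset.sum_nonneg fun _ _ => sq_nonneg _

lemma sqNorm_pos' {m : ℕ} {x : Fin m → ℝ} (hx : x ≠ 0) : 0 < sqNorm x := by
  obtain ⟨i, hi⟩ := Function.ne_iff.mp hx
  simp only [Pi.zero_apply] at hi
  exact Finset.sum_pos' (fun j _ => sq_nonneg _)
    ⟨i, Finset.mem_univ i, by positivity⟩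

lemma sparse_smul' {p k : ℕ} {α : Fin p → ℝ} (c : ℝ) (h : IsSparse k α) :
    IsSparse k (c • α) := by
  refine le_trans (Finset.card_le_card ?_) h
  intro i hi
  simp only [Finset.mem_filter, Finset.mem_univ, true_and, Pi.smul_apply, smul_eq_mul] at *
  exact fun h0 => hi (by rw [h0, mul_zero])

lemma sparse_add' {p k : ℕ} {α β : Fin p → ℝ} (h1 : IsSparse k α) (h2 : IsSparse k β) :
    IsSparse (2 * k) (α + β) := by
  have hsub : (Finset.univ.filter fun i => (α + β) i ≠ 0) ⊆
      (Finset.univ.filter fun i => α i ≠ 0) ∪ (Finset.univ.filter fun i => β i ≠ 0) := by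
    intro i hi
    simp only [Finset.mem_filter, Finset.mem_univ, true_and, Finset.mem_union, Pi.add_apply] at *
    by_contra hc
    push_neg at hc
    exact hi (by rw [hc.1, hc.2, add_zero])
  calc (Finset.univ.filter fun i => (α + β) i ≠ 0).card
      ≤ _ := Finset.card_le_card hsub
    _ ≤ _ + _ := Finset.card_union_le _ _
    _ ≤ k + k := Nat.add_le_add h1 h2
    _ = 2 * k := (two_mul k).symm

lemma rip_bounds {n p k : ℕ} (A : Matrix (Fin n) (Fin p) ℝ) {β : Fin p → ℝ}
    (hs : IsSparse k β) (hb : β ≠ 0) :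
    ripLower k A * sqNorm β ≤ sqNorm (A.mulVec β) ∧
    sqNorm (A.mulVec β) ≤ ripUpper k A * sqNorm β := by
  have hD : 0 < sqNorm β := sqNorm_pos' hb
  have hmem : sqNorm (A.mulVec β) / sqNorm β ∈
      {t : ℝ | ∃ α : Fin p → ℝ, IsSparse k α ∧ α ≠ 0 ∧
        t = sqNorm (A.mulVec α) / sqNorm α} := ⟨β, hs, hb, rfl⟩
  have hbddB : BddBelow {t : ℝ | ∃ α : Fin p → ℝ, IsSparse k α ∧ α ≠ 0 ∧
      t = sqNorm (A.mulVec α) / sqNorm α} := by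
    refine ⟨0, fun t ht => ?_⟩
    obtain ⟨α, _, hα, rfl⟩ := ht
    exact div_nonneg (sqNorm_nonneg' _) (sqNorm_nonneg' _)
  have hbddA : BddAbove {t : ℝ | ∃ α : Fin p → ℝ, IsSparse k α ∧ α ≠ 0 ∧
      t = sqNorm (A.mulVec α) / sqNorm α} := by
    refine ⟨∑ i, ∑ j, (A i j) ^ 2, fun t ht => ?_⟩
    obtain ⟨α, _, hα, rfl⟩ := ht
    have hDα : 0 < sqNorm α := sqNorm_pos' hα
    rw [div_le_iff₀ hDα]
    have : sqNorm (A.mulVec α) ≤ ∑ i, (∑ j, (A i j) ^ 2) * sqNorm α := by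
      apply Finset.sum_le_sum
      intro i _
      exact Finset.sum_mul_sq_le_sq_mul_sq Finset.univ (fun j => A i j) α
    simpa [Finset.sum_mul] using this
  constructor
  · have h := csInf_le hbddB hmem
    rw [ripLower]
    calc sInf _ * sqNorm β ≤ (sqNorm (A.mulVec β) / sqNorm β) * sqNorm β :=
          mul_le_mul_of_nonneg_right h hD.le
      _ = sqNorm (A.mulVec β) := div_mul_cancel₀ _ hD.ne'
  · have h := le_csSup hbddA hmem
    rw [ripUpper]
    calc sqNorm (A.mulVec β) = (sqNorm (A.mulVec β) / sqNorm β) * sqNorm β :=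
          (div_mul_cancel₀ _ hD.ne').symm
      _ ≤ sSup _ * sqNorm β := mul_le_mul_of_nonneg_right h hD.le

lemma sqNorm_smul' {m : ℕ} (c : ℝ) (x : Fin m → ℝ) :
    sqNorm (c • x) = c ^ 2 * sqNorm x := by
  simp only [sqNorm, Pi.smul_apply, smul_eq_mul, mul_pow, Finset.mul_sum]

lemma sqNorm_add' {m : ℕ} (x y : Fin m → ℝ) :
    sqNorm (x + y) = sqNorm x + 2 * (x ⬝ᵥ y) + sqNorm y := by
  simp only [sqNorm, dotProduct, Pi.add_apply, Finset.mul_sum]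
  rw [← Finset.sum_add_distrib, ← Finset.sum_add_distrib]
  exact Finset.sum_congr rfl fun i _ => by ring

lemma sqNorm_sub' {m : ℕ} (x y : Fin m → ℝ) :
    sqNorm (x - y) = sqNorm x - 2 * (x ⬝ᵥ y) + sqNorm y := by
  simp only [sqNorm, dotProduct, Pi.sub_apply, Finset.mul_sum]
  rw [← Finset.sum_sub_distrib, ← Finset.sum_add_distrib]
  exact Finset.sum_congr rfl fun i _ => by ring

/-- For `k`-sparse vectors with disjoint supports,
`|⟨Aα₁, Aα₂⟩| ≤ ((δ⁺_{2k} − δ⁻_{2k})/2) ‖α₁‖₂ ‖α₂‖₂`. -/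
theorem stmt_8 {n p : ℕ} (A : Matrix (Fin n) (Fin p) ℝ) (k : ℕ)
    (α₁ α₂ : Fin p → ℝ) (h₁ : IsSparse k α₁) (h₂ : IsSparse k α₂)
    (hdisj : ∀ i, α₁ i = 0 ∨ α₂ i = 0) :
    |A.mulVec α₁ ⬝ᵥ A.mulVec α₂| ≤
      (ripUpper (2 * k) A - ripLower (2 * k) A) / 2 *
        (Real.sqrt (sqNorm α₁) * Real.sqrt (sqNorm α₂)) := by
  by_cases hz1 : α₁ = 0
  · simp [hz1, sqNorm]
  by_cases hz2 : α₂ = 0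
  · simp [hz2, sqNorm]
  have hs : 0 < sqNorm α₁ := sqNorm_pos' hz1
  have ht : 0 < sqNorm α₂ := sqNorm_pos' hz2
  set a := Real.sqrt (sqNorm α₁) with ha_def
  set b := Real.sqrt (sqNorm α₂) with hb_def
  have ha : 0 < a := Real.sqrt_pos.mpr hs
  have hb : 0 < b := Real.sqrt_pos.mpr ht
  have ha2 : a ^ 2 = sqNorm α₁ := Real.sq_sqrt hs.le
  have hb2 : b ^ 2 = sqNorm α₂ := Real.sq_sqrt ht.le
  set u : Fin p → ℝ := a⁻¹ • α₁ with hu_def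
  set v : Fin p → ℝ := b⁻¹ • α₂ with hv_def
  have hu_sp : IsSparse k u := sparse_smul' _ h₁
  have hv_sp : IsSparse k v := sparse_smul' _ h₂
  have hdisj' : ∀ i, u i = 0 ∨ v i = 0 := by
    intro i
    rcases hdisj i with h | h
    · exact Or.inl (by simp [hu_def, h])
    · exact Or.inr (by simp [hv_def, h])
  have hnu : sqNorm u = 1 := by
    rw [hu_def, sqNorm_smul', ← ha2]
    field_simp
  have hnv : sqNorm v = 1 := by
    rw [hv_def, sqNorm_smul', ← hb2]
    field_simp
  have hdot0 : u ⬝ᵥ v = 0 := by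
    apply Finset.sum_eq_zero
    intro i _
    rcases hdisj' i with h | h <;> simp [h]
  -- u ≠ 0
  have hu_ne : u ≠ 0 := fun h => by
    have : sqNorm u = 1 := hnu
    rw [h] at this; simp [sqNorm] at this
  obtain ⟨i₀, hi₀⟩ := Function.ne_iff.mp hu_ne
  simp only [Pi.zero_apply] at hi₀
  have hvi₀ : v i₀ = 0 := (hdisj' i₀).resolve_left hi₀
  have hadd_ne : u + v ≠ 0 := by
    intro h
    have := congrFun h i₀
    simp [hvi₀] at this
    exact hi₀ this
  have hsub_ne : u - v ≠ 0 := by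
    intro h
    have := congrFun h i₀
    simp [hvi₀] at this
    exact hi₀ this
  have hadd_sp : IsSparse (2 * k) (u + v) := sparse_add' hu_sp hv_sp
  have hsub_sp : IsSparse (2 * k) (u - v) := by
    have : u - v = u + (-1 : ℝ) • v := by ext i; simp; ring
    rw [this]
    exact sparse_add' hu_sp (sparse_smul' _ hv_sp)
  have hnadd : sqNorm (u + v) = 2 := by rw [sqNorm_add', hnu, hnv, hdot0]; ring
  have hnsub : sqNorm (u - v) = 2 := by rw [sqNorm_sub', hnu, hnv, hdot0]; ring
  obtain ⟨hlo_add, hhi_add⟩ := rip_bounds A hadd_sp hadd_ne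
  obtain ⟨hlo_sub, hhi_sub⟩ := rip_bounds A hsub_sp hsub_ne
  rw [hnadd] at hlo_add hhi_add
  rw [hnsub] at hlo_sub hhi_sub
  have hexp_add : sqNorm (A.mulVec (u + v)) =
      sqNorm (A.mulVec u) + 2 * (A.mulVec u ⬝ᵥ A.mulVec v) + sqNorm (A.mulVec v) := by
    rw [Matrix.mulVec_add, sqNorm_add']
  have hexp_sub : sqNorm (A.mulVec (u - v)) =
      sqNorm (A.mulVec u) - 2 * (A.mulVec u ⬝ᵥ A.mulVec v) + sqNorm (A.mulVec v) := by
    rw [Matrix.mulVec_sub, sqNorm_sub']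
  set d := A.mulVec u ⬝ᵥ A.mulVec v with hd_def
  have hd_bound : |d| ≤ (ripUpper (2 * k) A - ripLower (2 * k) A) / 2 := by
    rw [abs_le]
    constructor <;> nlinarith [hlo_add, hhi_add, hlo_sub, hhi_sub, hexp_add, hexp_sub]
  have hscale : A.mulVec α₁ ⬝ᵥ A.mulVec α₂ = (a * b) * d := by
    rw [hd_def, hu_def, hv_def, Matrix.mulVec_smul, Matrix.mulVec_smul,
      smul_dotProduct, dotProduct_smul, smul_eq_mul, smul_eq_mul]
    field_simp
  rw [hscale, abs_mul, abs_of_pos (mul_pos ha hb)]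
  calc a * b * |d| ≤ a * b * ((ripUpper (2 * k) A - ripLower (2 * k) A) / 2) :=
        mul_le_mul_of_nonneg_left hd_bound (mul_pos ha hb).le
    _ = (ripUpper (2 * k) A - ripLower (2 * k) A) / 2 * (a * b) := by ring
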